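/- arXiv:2211.03121 — 2 statements merged into one kernel-verified Lean document; each statement's English description precedes it below -/
import Mathlib

section
/- Lower semicontinuity of the centered maximal operator under weak convergence: let μ be a Borel measure on a metric space X with all closed balls of finite measure, and let ν_n be finite Borel measures converging weakly to a finite Borel measure ν. Then for every x in the support of μ, liminf_{n→∞} M^c_μ ν_n(x) ≥ M^c_μ ν(x), where M^c_μ ν(x) = sup_{r>0} ν(B(x,r))/μ(B(x,r)) (with the convention 0 when μ(B(x,r))=0). -/
open MeasureTheory Metric ENNReal Filter Topology

/-- A set is a (nondegenerate) closed ball. -/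
def IsClosedBall {X : Type*} [MetricSpace X] (B : Set X) : Prop :=
  ∃ (c : X) (r : ℝ), 0 < r ∧ B = Metric.closedBall c r

/-- The support of a measure: points all of whose neighborhoods have positive measure. -/
def suppM {X : Type*} [MetricSpace X] [MeasurableSpace X] (μ : Measure X) : Set X :=
  {x | ∀ r > (0 : ℝ), 0 < μ (Metric.ball x r)}

/-- Average of `f` over a set, declared `0` when the set is `μ`-null. -/
noncomputable def avg {X : Type*} [MetricSpace X] [MeasurableSpace X]
    (μ : Measure X) (f : X → ℝ≥0∞) (B : Set X) : ℝ≥0∞ :=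
  if μ B = 0 then 0 else (∫⁻ y in B, f y ∂μ) / μ B

/-- Centered Hardy–Littlewood maximal function. -/
noncomputable def Mc {X : Type*} [MetricSpace X] [MeasurableSpace X]
    (μ : Measure X) (f : X → ℝ≥0∞) (x : X) : ℝ≥0∞ :=
  ⨆ r > (0 : ℝ), avg μ f (Metric.closedBall x r)

/-- Non-centered Hardy–Littlewood maximal function. -/
noncomputable def Munc {X : Type*} [MetricSpace X] [MeasurableSpace X]
    (μ : Measure X) (f : X → ℝ≥0∞) (x : X) : ℝ≥0∞ :=
  ⨆ B ∈ {B : Set X | IsClosedBall B ∧ x ∈ B}, avg μ f B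

/-- Ratio of measures with the convention `0` when the denominator vanishes. -/
noncomputable def ratio0 {X : Type*} [MeasurableSpace X] (μ ν : MeasureTheory.Measure X) (B : Set X) : ℝ≥0∞ :=
  if μ B = 0 then 0 else ν B / μ B

/-- Centered maximal function of a measure `ν` with respect to `μ`. -/
noncomputable def McMeas {X : Type*} [MetricSpace X] [MeasurableSpace X]
    (μ ν : Measure X) (x : X) : ℝ≥0∞ :=
  ⨆ r > (0 : ℝ), ratio0 μ ν (Metric.closedBall x r)

/-- Non-centered maximal function of a measure `ν` with respect to `μ`. -/
noncomputable def MuncMeas {X : Type*} [MetricSpace X] [MeasurableSpace X]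
    (μ ν : Measure X) (x : X) : ℝ≥0∞ :=
  ⨆ B ∈ {B : Set X | IsClosedBall B ∧ x ∈ B}, ratio0 μ ν B

/-! For `0 < r < s`, testing the weak convergence against a thickened indicator of `closedBall x r`
supported in `closedBall x s` gives `ν (closedBall x r) ≤ liminf νₙ (closedBall x s)`, and dividing
by `μ (closedBall x s)` bounds this by `liminf M^c νₙ x`. As `s ↓ r`, continuity from above (closed
balls have finite `μ`-measure) turns the denominator into `μ (closedBall x r)`, which is positive
because `x` lies in the support of `μ`. -/

lemma thickening_closedBall_subset_ball {X : Type*} [PseudoMetricSpace X] (x : X) (r δ : ℝ) :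
    thickening δ (closedBall x r) ⊆ ball x (r + δ) := by
  intro y hy
  obtain ⟨z, hz, hyz⟩ := mem_thickening_iff.mp hy
  rw [mem_ball]
  linarith [dist_triangle y z x, mem_closedBall.mp hz]

lemma tendsto_measure_closedBall_nhdsGT {X : Type*} [PseudoMetricSpace X] [MeasurableSpace X]
    [OpensMeasurableSpace X] (μ : Measure X) (x : X) {r : ℝ}
    (hfin : ∃ s > r, μ (closedBall x s) ≠ ∞) :
    Tendsto (fun s => μ (closedBall x s)) (𝓝[>] r) (𝓝 (μ (closedBall x r))) := by
  rw [← biInter_gt_closedBall x r]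
  exact tendsto_measure_biInter_gt (fun _ _ => measurableSet_closedBall.nullMeasurableSet)
    (fun _ _ _ => closedBall_subset_closedBall) hfin

section Portmanteau

variable {X ι : Type*} [MeasurableSpace X] {L : Filter ι} [L.NeBot]
  {ν : ι → Measure X} {νlim : Measure X} [∀ i, IsFiniteMeasure (ν i)] [IsFiniteMeasure νlim]

lemma measure_le_liminf_measure_thickening [PseudoEMetricSpace X] [OpensMeasurableSpace X]
    (hweak : ∀ g : BoundedContinuousFunction X ℝ,
      Tendsto (fun i => ∫ z, g z ∂(ν i)) L (𝓝 (∫ z, g z ∂νlim)))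
    {E : Set X} (hE : MeasurableSet E) {δ : ℝ} (hδ : 0 < δ) :
    νlim E ≤ liminf (fun i => ν i (thickening δ E)) L := by
  let νF : ι → FiniteMeasure X := fun i => ⟨ν i, inferInstance⟩
  let νlimF : FiniteMeasure X := ⟨νlim, inferInstance⟩
  have hlim : Tendsto νF L (𝓝 νlimF) := FiniteMeasure.tendsto_iff_forall_integral_tendsto.mpr hweak
  let g := thickenedIndicator hδ E
  have hg : ∀ i, ∫⁻ z, g z ∂(ν i) ≤ ν i (thickening δ E) := fun i => by
    rw [← lintegral_indicator_one isOpen_thickening.measurableSet]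
    refine lintegral_mono fun z => ?_
    by_cases hz : z ∈ thickening δ E
    · rw [Set.indicator_of_mem hz, Pi.one_apply]
      exact ENNReal.coe_le_one_iff.mpr (thickenedIndicator_le_one hδ E z)
    · simp [g, hz, thickenedIndicator_zero hδ E hz]
  calc νlim E ≤ ∫⁻ z, g z ∂νlim := measure_le_lintegral_thickenedIndicator νlim hE hδ
    _ = liminf (fun i => ∫⁻ z, g z ∂(ν i)) L :=
      ((FiniteMeasure.tendsto_iff_forall_lintegral_tendsto.mp hlim g).liminf_eq).symm
    _ ≤ liminf (fun i => ν i (thickening δ E)) L := liminf_le_liminf (.of_forall hg)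

lemma measure_closedBall_le_liminf_measure_closedBall [PseudoMetricSpace X]
    [OpensMeasurableSpace X]
    (hweak : ∀ g : BoundedContinuousFunction X ℝ,
      Tendsto (fun i => ∫ z, g z ∂(ν i)) L (𝓝 (∫ z, g z ∂νlim)))
    (x : X) {r s : ℝ} (hrs : r < s) :
    νlim (closedBall x r) ≤ liminf (fun i => ν i (closedBall x s)) L := by
  refine (measure_le_liminf_measure_thickening hweak measurableSet_closedBall
    (sub_pos.mpr hrs)).trans (liminf_le_liminf (.of_forall fun i => measure_mono ?_))
  refine (thickening_closedBall_subset_ball x r (s - r)).trans ?_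
  simpa using ball_subset_closedBall

end Portmanteau

section CenteredMaximal

variable {X : Type*} [MetricSpace X] [MeasurableSpace X]

lemma div_measure_closedBall_le_McMeas (μ ν : Measure X) (x : X) {s : ℝ} (hs : 0 < s)
    (hμ : μ (closedBall x s) ≠ 0) :
    ν (closedBall x s) / μ (closedBall x s) ≤ McMeas μ ν x := by
  have h := le_iSup₂ (f := fun t (_ : t > (0 : ℝ)) => ratio0 μ ν (closedBall x t)) s hs
  rwa [ratio0, if_neg hμ] at h

lemma measure_closedBall_div_le_liminf_McMeas [OpensMeasurableSpace X] (μ : Measure X)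
    {ι : Type*} {L : Filter ι} [L.NeBot] {ν : ι → Measure X} {νlim : Measure X}
    [∀ i, IsFiniteMeasure (ν i)] [IsFiniteMeasure νlim]
    (hweak : ∀ g : BoundedContinuousFunction X ℝ,
      Tendsto (fun i => ∫ z, g z ∂(ν i)) L (𝓝 (∫ z, g z ∂νlim)))
    (x : X) {r s : ℝ} (hr : 0 < r) (hrs : r < s) (hμ : μ (closedBall x s) ≠ 0) :
    νlim (closedBall x r) / μ (closedBall x s) ≤ liminf (fun i => McMeas μ (ν i) x) L := by
  calc νlim (closedBall x r) / μ (closedBall x s)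
      ≤ liminf (fun i => ν i (closedBall x s)) L / μ (closedBall x s) := by
        gcongr
        exact measure_closedBall_le_liminf_measure_closedBall hweak x hrs
    _ = liminf (fun i => ν i (closedBall x s) / μ (closedBall x s)) L := by
        simp_rw [div_eq_mul_inv]
        rw [ENNReal.liminf_mul_const_of_ne_top (ENNReal.inv_ne_top.mpr hμ), mul_comm]
    _ ≤ liminf (fun i => McMeas μ (ν i) x) L :=
        liminf_le_liminf (.of_forall fun i =>
          div_measure_closedBall_le_McMeas μ (ν i) x (hr.trans hrs) hμ)

end CenteredMaximal

theorem liminf_centered_maximal_general {X : Type*} [MetricSpace X] [MeasurableSpace X] [BorelSpace X]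
    (μ : Measure X) (hfin : ∀ (c : X) (r : ℝ), μ (closedBall c r) ≠ ∞)
    (ν : ℕ → Measure X) (νlim : Measure X)
    [∀ n, IsFiniteMeasure (ν n)] [IsFiniteMeasure νlim]
    (hweak : ∀ g : BoundedContinuousFunction X ℝ,
      Tendsto (fun n => ∫ z, g z ∂(ν n)) atTop (nhds (∫ z, g z ∂νlim)))
    (x : X) (hx : x ∈ suppM μ) :
    McMeas μ νlim x ≤ liminf (fun n => McMeas μ (ν n) x) atTop := by
  have hpos : ∀ r > (0 : ℝ), μ (closedBall x r) ≠ 0 := fun r hr =>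
    ((hx r hr).trans_le (measure_mono ball_subset_closedBall)).ne'
  refine iSup₂_le fun r hr => ?_
  rw [ratio0, if_neg (hpos r hr)]
  have hlim : Tendsto (fun s => νlim (closedBall x r) / μ (closedBall x s)) (𝓝[>] r)
      (𝓝 (νlim (closedBall x r) / μ (closedBall x r))) :=
    ENNReal.Tendsto.const_div
      (tendsto_measure_closedBall_nhdsGT μ x ⟨r + 1, by linarith, hfin x (r + 1)⟩)
      (.inr (measure_ne_top _ _))
  refine le_of_tendsto hlim (eventually_nhdsWithin_of_forall fun s hs => ?_)
  exact measure_closedBall_div_le_liminf_McMeas μ hweak x hr hs (hpos s (hr.trans hs))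

/-- Lower semicontinuity of the centered maximal operator under weak convergence. -/
theorem liminf_centered_maximal {X : Type*} [MetricSpace X] [MeasurableSpace X] [BorelSpace X]
    (μ : Measure X) (hfin : ∀ (c : X) (r : ℝ), μ (closedBall c r) ≠ ∞)
    (hsupp : (suppM μ).Nonempty)
    (ν : ℕ → Measure X) (νlim : Measure X)
    [∀ n, IsFiniteMeasure (ν n)] [IsFiniteMeasure νlim]
    (hweak : ∀ g : BoundedContinuousFunction X ℝ,
      Tendsto (fun n => ∫ z, g z ∂(ν n)) atTop (nhds (∫ z, g z ∂νlim)))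
    (x : X) (hx : x ∈ suppM μ) :
    McMeas μ νlim x ≤ liminf (fun n => McMeas μ (ν n) x) atTop :=
  liminf_centered_maximal_general μ hfin ν νlim hweak x hx
end

section
/- If μ is a continuous (atomless) Borel measure on ℝ^n (or more generally on a Riemannian manifold with its geodesic distance), finite on closed balls, whose support contains a nondegenerate geodesic segment, then there exists f ∈ L^1(μ) and a point z ∈ supp(μ) at which the non-centered maximal function strictly exceeds the centered one: M_μ f(z) > M^c_μ f(z). -/
open MeasureTheory Metric ENNReal Filter

/-! Let `p` be an endpoint of the segment, `z` its midpoint and `f` the indicator of a small ball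
`closedBall p δ`. A ball centred at `z` meets `closedBall p δ` only once its radius reaches
`dist p z - δ`, so `Mc μ f z ≤ μ (closedBall p δ) / μ (closedBall z (dist p z - δ))`. The ball of
radius `dist p z / 2 + δ` centred at the midpoint of `p` and `z` contains `z` and `closedBall p δ`,
and it is lighter than `closedBall z (dist p z - δ)` for small `δ`: its excess over that ball is a
lune which, by strict convexity, shrinks to `{p}` as `δ → 0`, hence has vanishing mass since `μ`
has no atoms, while the centred ball keeps a fixed positive mass near the three-quarter point of
the segment. -/

open Topology AffineMap

section StrictConvex

variable {E : Type*} [NormedAddCommGroup E] [NormedSpace ℝ E]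

theorem dist_left_midpoint_eq_half (p z : E) : dist p (midpoint ℝ p z) = dist p z / 2 := by
  rw [dist_left_midpoint, Real.norm_two, inv_mul_eq_div]

theorem dist_midpoint_right_eq_half (p z : E) : dist (midpoint ℝ p z) z = dist p z / 2 := by
  rw [dist_midpoint_right, Real.norm_two, inv_mul_eq_div]

theorem eq_of_dist_midpoint_le_of_le_dist [StrictConvexSpace ℝ E] {p z x : E}
    (hm : dist x (midpoint ℝ p z) ≤ dist p z / 2) (hz : dist p z ≤ dist x z) : x = p := by
  set m := midpoint ℝ p z
  have hmz : dist m z = dist p z / 2 := dist_midpoint_right_eq_half p z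
  have hxz : dist x z = dist p z := by linarith [dist_triangle x m z]
  have hmid : m = midpoint ℝ x z :=
    eq_midpoint_of_dist_eq_half (by linarith [dist_triangle x m z]) (by rw [hmz, hxz])
  refine add_right_cancel (b := z) ?_
  calc x + z = m + m := by rw [hmid, midpoint_add_self]
    _ = p + z := midpoint_add_self ℝ p z

theorem biInter_closedBall_midpoint_diff_closedBall [StrictConvexSpace ℝ E] (p z : E) :
    ⋂ δ > (0 : ℝ), (closedBall (midpoint ℝ p z) (dist p z / 2 + δ) \ closedBall z (dist p z - δ))
      = {p} := by
  ext x
  simp only [Set.mem_iInter, Set.mem_sdiff, mem_closedBall, not_le, Set.mem_singleton_iff]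
  constructor
  · intro hx
    refine eq_of_dist_midpoint_le_of_le_dist (z := z) (le_of_forall_pos_lt_add fun δ hδ => ?_)
      (le_of_forall_pos_lt_add fun δ hδ => ?_)
    · linarith [(hx (δ / 2) (half_pos hδ)).1]
    · linarith [(hx δ hδ).2]
  · rintro rfl δ hδ
    rw [dist_left_midpoint_eq_half]
    constructor <;> linarith [dist_self x]

end StrictConvex

section MaximalFunction

variable {X : Type*} [MetricSpace X] [MeasurableSpace X] {μ : Measure X}

theorem avg_le_munc (f : X → ℝ≥0∞) {B : Set X} (hB : IsClosedBall B) {z : X} (hz : z ∈ B) :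
    avg μ f B ≤ Munc μ f z :=
  le_biSup (fun B => avg μ f B) (⟨hB, hz⟩ : IsClosedBall B ∧ z ∈ B)

variable {D : Set X}

theorem avg_indicator_one (hD : MeasurableSet D) {B : Set X} (hB : μ B ≠ 0) :
    avg μ (D.indicator 1) B = μ (D ∩ B) / μ B := by
  rw [avg, if_neg hB, lintegral_indicator_one hD, Measure.restrict_apply hD]

theorem mc_indicator_one_le (hD : MeasurableSet D) {z : X} {R : ℝ}
    (hR : ∀ x ∈ D, R ≤ dist x z) (hR0 : μ (closedBall z R) ≠ 0) :
    Mc μ (D.indicator 1) z ≤ μ D / μ (closedBall z R) := by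
  refine iSup₂_le fun r _ => ?_
  rcases lt_or_ge r R with hr | hr
  · have hdisj : D ∩ closedBall z r = ∅ := Set.eq_empty_of_forall_notMem fun x hx =>
      (hR x hx.1).not_gt (hr.trans_le' (mem_closedBall.mp hx.2))
    simp [avg, lintegral_indicator_one hD, Measure.restrict_apply hD, hdisj]
  · have hsub : closedBall z R ⊆ closedBall z r := closedBall_subset_closedBall hr
    rw [avg_indicator_one hD (ne_bot_of_le_ne_bot hR0 (measure_mono hsub))]
    exact ENNReal.div_le_div (measure_mono Set.inter_subset_left) (measure_mono hsub)

theorem mc_indicator_one_lt_munc (hD : MeasurableSet D) (hD0 : μ D ≠ 0) (hDtop : μ D ≠ ∞)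
    {z : X} {R : ℝ} (hR : ∀ x ∈ D, R ≤ dist x z) {B : Set X} (hB : IsClosedBall B)
    (hzB : z ∈ B) (hDB : D ⊆ B) (hlt : μ B < μ (closedBall z R)) :
    Mc μ (D.indicator 1) z < Munc μ (D.indicator 1) z := by
  have hB0 : μ B ≠ 0 := ne_bot_of_le_ne_bot hD0 (measure_mono hDB)
  calc Mc μ (D.indicator 1) z ≤ μ D / μ (closedBall z R) := mc_indicator_one_le hD hR hlt.ne_bot
    _ < μ D / μ B := ENNReal.div_lt_div_left hD0 hDtop hlt
    _ = avg μ (D.indicator 1) B := by rw [avg_indicator_one hD hB0, Set.inter_eq_left.2 hDB]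
    _ ≤ Munc μ (D.indicator 1) z := avg_le_munc _ hB hzB

end MaximalFunction

section Lune

variable {E : Type*} [NormedAddCommGroup E] [NormedSpace ℝ E] [MeasurableSpace E]
  {μ : Measure E} {p z : E}

theorem tendsto_measure_closedBall_midpoint_diff_closedBall [StrictConvexSpace ℝ E]
    [OpensMeasurableSpace E] (hp : μ {p} = 0)
    (hfin : ∀ r, μ (closedBall (midpoint ℝ p z) r) ≠ ∞) :
    Tendsto (fun δ => μ (closedBall (midpoint ℝ p z) (dist p z / 2 + δ) \
      closedBall z (dist p z - δ))) (𝓝[>] 0) (𝓝 0) := by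
  have h := tendsto_measure_biInter_gt (μ := μ) (a := (0 : ℝ))
    (s := fun δ => closedBall (midpoint ℝ p z) (dist p z / 2 + δ) \ closedBall z (dist p z - δ))
    (fun _ _ => (measurableSet_closedBall.diff measurableSet_closedBall).nullMeasurableSet)
    (fun _ _ _ hij => Set.sdiff_subset_sdiff (closedBall_subset_closedBall (by linarith))
      (closedBall_subset_closedBall (by linarith)))
    ⟨1, one_pos, ne_top_of_le_ne_top (hfin _) (measure_mono Set.sdiff_subset)⟩
  rwa [biInter_closedBall_midpoint_diff_closedBall, hp] at h

theorem exists_measure_closedBall_midpoint_lt [StrictConvexSpace ℝ E] [OpensMeasurableSpace E]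
    (hp : μ {p} = 0) (hfin : ∀ r, μ (closedBall (midpoint ℝ p z) r) ≠ ∞) {ε : ℝ} (hε : 0 < ε)
    (hring : 0 < μ (closedBall z (dist p z - ε) \
      closedBall (midpoint ℝ p z) (dist p z / 2 + ε))) :
    ∃ δ > 0, μ (closedBall (midpoint ℝ p z) (dist p z / 2 + δ)) <
      μ (closedBall z (dist p z - δ)) := by
  obtain ⟨δ, hlune, hδ⟩ := (((tendsto_measure_closedBall_midpoint_diff_closedBall hp hfin).eventually
    (gt_mem_nhds hring)).and (Ioc_mem_nhdsGT hε)).exists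
  refine ⟨δ, hδ.1, ?_⟩
  set A := closedBall (midpoint ℝ p z) (dist p z / 2 + δ)
  set B := closedBall z (dist p z - δ)
  have hring_sub : closedBall z (dist p z - ε) \ closedBall (midpoint ℝ p z) (dist p z / 2 + ε)
      ⊆ B \ A := Set.sdiff_subset_sdiff (closedBall_subset_closedBall (by linarith [hδ.2]))
        (closedBall_subset_closedBall (by linarith [hδ.2]))
  calc μ A ≤ μ (A ∩ B) + μ (A \ B) := measure_le_inter_add_sdiff μ A B
    _ < μ (B ∩ A) + μ (B \ A) := by
      rw [Set.inter_comm]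
      exact ENNReal.add_lt_add_left (ne_top_of_le_ne_top (hfin _)
        (measure_mono Set.inter_subset_right)) (hlune.trans_le (measure_mono hring_sub))
    _ = μ B := measure_inter_add_sdiff B measurableSet_closedBall

theorem mc_indicator_closedBall_lt_munc [OpensMeasurableSpace E] {δ : ℝ} (hδ : 0 < δ)
    (hp : μ (closedBall p δ) ≠ 0) (hfin : μ (closedBall p δ) ≠ ∞)
    (hlt : μ (closedBall (midpoint ℝ p z) (dist p z / 2 + δ)) < μ (closedBall z (dist p z - δ))) :
    Mc μ ((closedBall p δ).indicator 1) z < Munc μ ((closedBall p δ).indicator 1) z := by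
  refine mc_indicator_one_lt_munc measurableSet_closedBall hp hfin (fun x hx => ?_)
    ⟨_, _, by positivity, rfl⟩ ?_ (closedBall_subset_closedBall' ?_) hlt
  · linarith [dist_triangle_left p z x, mem_closedBall.mp hx]
  · rw [mem_closedBall, dist_comm, dist_midpoint_right_eq_half]
    linarith
  · rw [dist_left_midpoint_eq_half]
    linarith

theorem measure_closedBall_midpoint_diff_closedBall_pos {a b : E} (hab : a ≠ b)
    (hsub : segment ℝ a b ⊆ suppM μ) :
    0 < μ (closedBall (midpoint ℝ a b) (dist a (midpoint ℝ a b) - dist a b / 8) \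
      closedBall (midpoint ℝ a (midpoint ℝ a b)) (dist a (midpoint ℝ a b) / 2 + dist a b / 8)) := by
  have hL : 0 < dist a b := dist_pos.2 hab
  have hz : midpoint ℝ a b = lineMap a b (1 / 2 : ℝ) := by
    simp only [midpoint_eq_smul_add, lineMap_apply_module, invOf_eq_inv]
    module
  have hm : midpoint ℝ a (midpoint ℝ a b) = lineMap a b (1 / 4 : ℝ) := by
    simp only [midpoint_eq_smul_add, lineMap_apply_module, invOf_eq_inv]
    module
  have hq : lineMap a b (3 / 4 : ℝ) ∈ segment ℝ a b := by
    rw [segment_eq_image_lineMap]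
    exact ⟨3 / 4, ⟨by norm_num, by norm_num⟩, rfl⟩
  have hqz : dist (lineMap a b (3 / 4 : ℝ)) (lineMap a b (1 / 2 : ℝ) : E) = dist a b / 4 := by
    rw [dist_lineMap_lineMap, Real.dist_eq, show |(3 / 4 : ℝ) - 1 / 2| = 1 / 4 by norm_num]
    ring
  have hqm : dist (lineMap a b (3 / 4 : ℝ)) (lineMap a b (1 / 4 : ℝ) : E) = dist a b / 2 := by
    rw [dist_lineMap_lineMap, Real.dist_eq, show |(3 / 4 : ℝ) - 1 / 4| = 1 / 2 by norm_num]
    ring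
  refine (hsub hq (dist a b / 8) (by positivity)).trans_le (measure_mono fun x hx => ?_)
  rw [mem_ball] at hx
  rw [dist_left_midpoint_eq_half, hm, hz, Set.mem_sdiff, mem_closedBall, mem_closedBall, not_le]
  constructor <;> linarith [dist_triangle x (lineMap a b (3 / 4 : ℝ)) (lineMap a b (1 / 2 : ℝ)),
    dist_triangle_left (lineMap a b (3 / 4 : ℝ)) (lineMap a b (1 / 4 : ℝ)) x]

end Lune

/-- On Euclidean space, if an atomless measure's support contains a nondegenerate segment,
the non-centered maximal function strictly exceeds the centered one for some `f ∈ L¹(μ)`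
at some support point. -/
theorem uncentered_gt_centered_of_segment {n : ℕ}
    (μ : Measure (EuclideanSpace ℝ (Fin n)))
    (hfin : ∀ (c : EuclideanSpace ℝ (Fin n)) (r : ℝ), μ (closedBall c r) ≠ ∞)
    (hatomless : ∀ p : EuclideanSpace ℝ (Fin n), μ {p} = 0)
    (hseg : ∃ a b : EuclideanSpace ℝ (Fin n), a ≠ b ∧ segment ℝ a b ⊆ suppM μ) :
    ∃ f : EuclideanSpace ℝ (Fin n) → ℝ≥0∞, Measurable f ∧ (∫⁻ z, f z ∂μ) ≠ ∞ ∧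
      ∃ z ∈ suppM μ, Mc μ f z < Munc μ f z := by
  obtain ⟨a, b, hab, hsub⟩ := hseg
  have hε : 0 < dist a b / 8 := by have := dist_pos.2 hab; positivity
  obtain ⟨δ, hδ, hlt⟩ := exists_measure_closedBall_midpoint_lt (hatomless a) (hfin _) hε
    (measure_closedBall_midpoint_diff_closedBall_pos hab hsub)
  have ha : 0 < μ (closedBall a δ) :=
    (hsub (left_mem_segment ℝ a b) δ hδ).trans_le (measure_mono ball_subset_closedBall)
  refine ⟨(closedBall a δ).indicator 1, measurable_one.indicator measurableSet_closedBall,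
    by rw [lintegral_indicator_one measurableSet_closedBall]; exact hfin a δ,
    midpoint ℝ a b, hsub (midpoint_mem_segment a b), ?_⟩
  exact mc_indicator_closedBall_lt_munc hδ ha.ne' (hfin a δ) hlt
end
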